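/- arXiv:2301.06952 — 4 statements merged into one kernel-verified Lean document; each statement's English description precedes it below -/
import Mathlib

section
/- Let n ≥ 3 and g(y) = Σ_{1≤i<j<k≤n} y_i y_j y_k in ℂ[y_1,…,y_n]. If a point y ∈ ℂ^n \ {0} satisfies ∂g/∂y_i(y) = 0 for all i = 1,…,n, then y is a scalar multiple of a standard basis vector e_i for some i. -/
open MvPolynomial

set_option maxHeartbeats 1000000 in
/-- The singular points of the cubic `g = ∑_{i<j<k} y_i y_j y_k` in `ℙ^{n-1}`
are among the coordinate points. -/
theorem stmt0 (n : ℕ) (hn : 3 ≤ n)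
    (g : MvPolynomial (Fin n) ℂ)
    (hg : g = ∑ i : Fin n, ∑ j : Fin n, ∑ k : Fin n,
      if i < j ∧ j < k then X i * X j * X k else 0)
    (y : Fin n → ℂ) (hy : y ≠ 0)
    (hcrit : ∀ i : Fin n, eval y (pderiv i g) = 0) :
    ∃ (i : Fin n) (c : ℂ), y = c • (Pi.single i 1 : Fin n → ℂ) := by
  -- The master identity: twice the derivative evaluated at `y` equals
  -- `(S - yᵢ)² - (P - yᵢ²)` where `S = ∑ yⱼ`, `P = ∑ yⱼ²`.
  have master : ∀ i : Fin n, 2 * eval y (pderiv i g)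
      = ((∑ j, y j) - y i) * ((∑ j, y j) - y i) - ((∑ j, y j * y j) - y i * y i) := by
    intro i
    -- Step A: evaluate the derivative as a triple sum
    have hA : eval y (pderiv i g) = ∑ a : Fin n, ∑ b : Fin n, ∑ c : Fin n,
        if a < b ∧ b < c then
          ((if a = i then y b * y c else 0) + (if b = i then y a * y c else 0)
            + (if c = i then y a * y b else 0)) else 0 := by
      subst hg
      simp only [map_sum, apply_ite (pderiv i), map_zero, pderiv_mul, pderiv_X,
        Pi.single_apply, apply_ite (eval y), eval_mul, eval_add, eval_zero, map_one, eval_X]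
      refine Finset.sum_congr rfl fun a _ => Finset.sum_congr rfl fun b _ =>
        Finset.sum_congr rfl fun c _ => ?_
      split_ifs <;> ring
    -- Step B: collapse the triple sum to a double sum over pairs avoiding `i`
    have hB : (∑ a : Fin n, ∑ b : Fin n, ∑ c : Fin n,
        if a < b ∧ b < c then
          ((if a = i then y b * y c else 0) + (if b = i then y a * y c else 0)
            + (if c = i then y a * y b else 0)) else 0)
        = ∑ j : Fin n, ∑ k : Fin n, if j ≠ i ∧ k ≠ i ∧ j < k then y j * y k else 0 := by
      have key : ∀ a b c : Fin n,
          (if a < b ∧ b < c then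
            ((if a = i then y b * y c else 0) + (if b = i then y a * y c else 0)
              + (if c = i then y a * y b else 0)) else 0)
          = (if a = i then (if a < b ∧ b < c then y b * y c else 0) else 0)
            + (if b = i then (if a < b ∧ b < c then y a * y c else 0) else 0)
            + (if c = i then (if a < b ∧ b < c then y a * y b else 0) else 0) := by
        intro a b c; split_ifs <;> ring1
      simp only [key, Finset.sum_add_distrib, Finset.sum_ite_irrel, Finset.sum_const_zero,
        Finset.sum_ite_eq', Finset.mem_univ, if_true]
      have split : ∀ j k : Fin n, (if j ≠ i ∧ k ≠ i ∧ j < k then y j * y k else 0)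
          = (if i < j ∧ j < k then y j * y k else 0) + (if j < i ∧ i < k then y j * y k else 0)
            + (if j < k ∧ k < i then y j * y k else 0) := by
        intro j k
        simp only [Fin.lt_def, ne_eq, ← Fin.val_ne_iff, ← Fin.val_eq_val]
        split_ifs <;> (first | ring1 | (exfalso; omega))
      simp only [split, Finset.sum_add_distrib]
    -- Step C: compute twice the double sum in closed form
    rw [hA, hB]
    have hswap : (∑ j : Fin n, ∑ k : Fin n, if j ≠ i ∧ k ≠ i ∧ j < k then y j * y k else 0)
        = ∑ j : Fin n, ∑ k : Fin n, if k ≠ i ∧ j ≠ i ∧ k < j then y k * y j else 0 :=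
      Finset.sum_comm
    have hfull : (∑ j : Fin n, ∑ k : Fin n, if j ≠ i ∧ k ≠ i then y j * y k else 0)
        = ((∑ j, y j) - y i) * ((∑ j, y j) - y i) := by
      have t1 : ∀ j k : Fin n, (if j ≠ i ∧ k ≠ i then y j * y k else 0)
          = (if j ≠ i then y j else 0) * (if k ≠ i then y k else 0) := by
        intro j k; split_ifs <;> first | ring1 | (exfalso; tauto)
      have t2 : (∑ j : Fin n, if j ≠ i then y j else 0) = (∑ j, y j) - y i := by
        have : ∀ j : Fin n, (if j ≠ i then y j else 0) = y j - (if j = i then y j else 0) := by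
          intro j; split_ifs <;> first | ring1 | (exfalso; tauto)
        simp [this, Finset.sum_sub_distrib, Finset.sum_ite_eq']
      simp only [t1, ← Finset.sum_mul_sum, t2]
    have hdiag : (∑ j : Fin n, ∑ k : Fin n, if j = k ∧ j ≠ i then y j * y k else 0)
        = (∑ j, y j * y j) - y i * y i := by
      have t1 : ∀ j k : Fin n, (if j = k ∧ j ≠ i then y j * y k else 0)
          = (if k = j then (if j ≠ i then y j * y j else 0) else 0) := by
        intro j k
        rcases eq_or_ne k j with h | h
        · subst h; simp
        · rw [if_neg (fun hh => h hh.1.symm), if_neg h]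
      have t2 : ∀ j : Fin n, (if j ≠ i then y j * y j else 0)
          = y j * y j - (if j = i then y j * y j else 0) := by
        intro j; split_ifs <;> first | ring1 | (exfalso; tauto)
      simp [t1, t2, Finset.sum_ite_eq', Finset.sum_sub_distrib]
    have combine : ∀ j k : Fin n,
        (if j ≠ i ∧ k ≠ i ∧ j < k then y j * y k else 0)
          + (if k ≠ i ∧ j ≠ i ∧ k < j then y k * y j else 0)
        = (if j ≠ i ∧ k ≠ i then y j * y k else 0)
          - (if j = k ∧ j ≠ i then y j * y k else 0) := by
      intro j k
      simp only [Fin.lt_def, ne_eq, ← Fin.val_ne_iff, ← Fin.val_eq_val]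
      split_ifs <;> (first | ring1 | (exfalso; omega))
    calc 2 * (∑ j : Fin n, ∑ k : Fin n, if j ≠ i ∧ k ≠ i ∧ j < k then y j * y k else 0)
        = ∑ j : Fin n, ∑ k : Fin n, ((if j ≠ i ∧ k ≠ i ∧ j < k then y j * y k else 0)
            + (if k ≠ i ∧ j ≠ i ∧ k < j then y k * y j else 0)) := by
          simp only [Finset.sum_add_distrib, ← hswap]; ring
      _ = ((∑ j, y j) - y i) * ((∑ j, y j) - y i) - ((∑ j, y j * y j) - y i * y i) := by
          simp only [combine, Finset.sum_sub_distrib, hfull, hdiag]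
  -- From criticality, each `(S - yᵢ)² - (P - yᵢ²) = 0`.
  have hm : ∀ i : Fin n, ((∑ j, y j) - y i) * ((∑ j, y j) - y i)
      - ((∑ j, y j * y j) - y i * y i) = 0 := by
    intro i
    rw [← master i, hcrit i]; ring
  -- Summing over `i`: `(n - 2) (S² - P) = 0`, so `P = S²`.
  have hzero : ((n : ℂ) - 2) * ((∑ j, y j) * (∑ j, y j) - (∑ j, y j * y j)) = 0 := by
    have h1 : ∑ i : Fin n, (((∑ j, y j) - y i) * ((∑ j, y j) - y i)
        - ((∑ j, y j * y j) - y i * y i)) = 0 := by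
      simp [hm]
    have e : ∀ i : Fin n, ((∑ j, y j) - y i) * ((∑ j, y j) - y i)
        - ((∑ j, y j * y j) - y i * y i)
        = ((∑ j, y j) * (∑ j, y j) - (∑ j, y j * y j))
          - (2 * (∑ j, y j)) * y i + 2 * (y i * y i) := fun i => by ring
    rw [Finset.sum_congr rfl (fun i _ => e i)] at h1
    simp only [Finset.sum_add_distrib, Finset.sum_sub_distrib, ← Finset.mul_sum,
      Finset.sum_const, Finset.card_univ, Fintype.card_fin, nsmul_eq_mul] at h1
    linear_combination h1
  have hP2 : (∑ j, y j * y j) = (∑ j, y j) * (∑ j, y j) := by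
    have hne : (n : ℂ) - 2 ≠ 0 := by
      have h2 : (n : ℂ) ≠ 2 := by
        exact_mod_cast (by omega : n ≠ 2)
      exact sub_ne_zero.mpr h2
    have h3 := (mul_eq_zero.mp hzero).resolve_left hne
    linear_combination -h3
  -- Each coordinate is `0` or `S`.
  have hyi : ∀ i : Fin n, y i = 0 ∨ y i = (∑ j, y j) := by
    intro i
    have h4 : y i * (y i - (∑ j, y j)) = 0 := by
      linear_combination (hm i) / 2 + hP2 / 2
    rcases mul_eq_zero.mp h4 with h | h
    · exact Or.inl h
    · exact Or.inr (sub_eq_zero.mp h)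
  -- Pick a nonzero coordinate.
  obtain ⟨i0, hi0⟩ : ∃ i, y i ≠ 0 := by
    by_contra h
    push_neg at h
    exact hy (funext h)
  have hS0 : y i0 = (∑ j, y j) := (hyi i0).resolve_left hi0
  have hSne : (∑ j, y j) ≠ 0 := hS0 ▸ hi0
  -- Counting: the number of nonzero coordinates is 1.
  set F : Finset (Fin n) := Finset.univ.filter (fun i => y i ≠ 0) with hF
  have hFsum : ∑ i ∈ F, y i = (∑ j, y j) := by
    rw [hF]
    exact Finset.sum_filter_of_ne (fun x _ h => h)
  have hFS : ∀ i ∈ F, y i = (∑ j, y j) := fun i hiF =>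
    (hyi i).resolve_left (Finset.mem_filter.mp hiF).2
  have hcard : (F.card : ℂ) * (∑ j, y j) = 1 * (∑ j, y j) := by
    conv_rhs => rw [one_mul, ← hFsum]
    rw [Finset.sum_congr rfl hFS, Finset.sum_const, nsmul_eq_mul]
  have hcard1 : F.card = 1 := by
    have h5 : (F.card : ℂ) = 1 := mul_right_cancel₀ hSne hcard
    exact_mod_cast h5
  obtain ⟨a, ha⟩ := Finset.card_eq_one.mp hcard1
  have hi0F : i0 ∈ F := by simp [hF, hi0]
  have hai0 : a = i0 := by
    rw [ha] at hi0F
    exact (Finset.mem_singleton.mp hi0F).symm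
  refine ⟨i0, y i0, funext fun j => ?_⟩
  by_cases hj : j = i0
  · subst hj; simp
  · have hjF : j ∉ F := by
      rw [ha, hai0]
      simp [hj]
    have hj0 : y j = 0 := by
      by_contra hc
      exact hjF (by simp [hF, hc])
    simp [hj0, Pi.single_apply, hj]
end

section
/- Let n ≥ 3 and g(y) = Σ_{1≤i<j≤n} y_i^2 y_j^2. If y ∈ ℂ^n \ {0} satisfies ∂g/∂y_i(y) = 0 for all i, then y is a scalar multiple of a standard basis vector. -/
open MvPolynomial

lemma term_eval (n : ℕ) (k i j : Fin n) (y : Fin n → ℂ) :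
    eval y (pderiv k (X i ^ 2 * X j ^ 2 : MvPolynomial (Fin n) ℂ)) =
      2 * y k * ((if i = k then (y j)^2 else 0) + (if j = k then (y i)^2 else 0)) := by
  simp only [pow_two, pderiv_mul, pderiv_X, Pi.single_apply, map_add, map_mul,
    eval_X, map_one, map_zero]
  split_ifs <;> subst_vars <;> simp <;> (try ring) <;> tauto

lemma sum_lem (n : ℕ) (k : Fin n) (f : Fin n → ℂ) :
    (∑ i : Fin n, ∑ j : Fin n, if i < j then
      ((if i = k then f j else 0) + (if j = k then f i else 0)) else 0)
     = (∑ j, f j) - f k := by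
  have split : ∀ (i j : Fin n), (if i < j then
      ((if i = k then f j else 0) + (if j = k then f i else 0)) else 0)
      = (if i = k then (if i < j then f j else 0) else 0)
        + (if j = k then (if i < j then f i else 0) else 0) := by
    intro i j; split_ifs <;> simp_all
  have A : (∑ i : Fin n, ∑ j : Fin n, if i = k then (if i < j then f j else 0) else 0)
      = ∑ j : Fin n, if k < j then f j else 0 := by
    rw [Finset.sum_comm]; simp [Finset.sum_ite_eq']
  have B : (∑ i : Fin n, ∑ j : Fin n, if j = k then (if i < j then f i else 0) else 0)
      = ∑ i : Fin n, if i < k then f i else 0 := by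
    simp [Finset.sum_ite_eq']
  simp only [split, Finset.sum_add_distrib]
  rw [A, B]
  have : ∀ j : Fin n, (if k < j then f j else 0) + (if j < k then f j else 0)
      = if j ≠ k then f j else 0 := by
    intro j
    rcases lt_trichotomy j k with h | h | h
    · simp [h, asymm h, h.ne, not_lt_of_gt h]
    · subst h; simp
    · simp [h, asymm h, h.ne', not_lt_of_gt h]
  rw [← Finset.sum_add_distrib, Finset.sum_congr rfl (fun j _ => this j)]
  have h2 : f k = ∑ j : Fin n, if j = k then f j else 0 := by
    rw [Finset.sum_ite_eq']; simp
  rw [eq_sub_iff_add_eq, h2, ← Finset.sum_add_distrib]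
  apply Finset.sum_congr rfl
  intro j _
  by_cases h : j = k <;> simp [h]

/-- The singular points of the quartic `g = ∑_{i<j} y_i² y_j²` in `ℙ^{n-1}`
are among the coordinate points. -/
theorem stmt4 (n : ℕ) (hn : 3 ≤ n)
    (g : MvPolynomial (Fin n) ℂ)
    (hg : g = ∑ i : Fin n, ∑ j : Fin n,
      if i < j then X i ^ 2 * X j ^ 2 else 0)
    (y : Fin n → ℂ) (hy : y ≠ 0)
    (hcrit : ∀ i : Fin n, eval y (pderiv i g) = 0) :
    ∃ (i : Fin n) (c : ℂ), y = c • (Pi.single i 1 : Fin n → ℂ) := by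
  set S : ℂ := ∑ j, (y j) ^ 2 with hS
  have key : ∀ k : Fin n, y k * (S - y k ^ 2) = 0 := by
    intro k
    have h := hcrit k
    rw [hg] at h
    simp only [map_sum, apply_ite (pderiv k), map_zero, apply_ite (eval y),
      term_eval] at h
    have h2 : (∑ i : Fin n, ∑ j : Fin n, if i < j then
        2 * y k * ((if i = k then (y j)^2 else 0) + (if j = k then (y i)^2 else 0)) else 0)
        = 2 * y k * (S - y k ^ 2) := by
      rw [← sum_lem n k (fun j => (y j)^2)]
      rw [Finset.mul_sum]
      apply Finset.sum_congr rfl; intro i _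
      rw [Finset.mul_sum]
      apply Finset.sum_congr rfl; intro j _
      split_ifs <;> ring
    rw [h2] at h
    linear_combination h / 2
  -- existence of nonzero coordinate
  obtain ⟨i, hi⟩ : ∃ i, y i ≠ 0 := by
    by_contra h
    push_neg at h
    exact hy (funext h)
  have hSi : S = y i ^ 2 := by
    have := key i
    rcases mul_eq_zero.mp this with h | h
    · exact absurd h hi
    · linear_combination h
  -- all other coords are zero
  have hzero : ∀ j, j ≠ i → y j = 0 := by
    intro j hj
    by_contra hyj
    have hSj : S = y j ^ 2 := by
      rcases mul_eq_zero.mp (key j) with h | h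
      · exact absurd h hyj
      · linear_combination h
    set T : Finset (Fin n) := Finset.univ.filter (fun l => y l ≠ 0) with hT
    clear_value T
    have hST : ∀ l ∈ T, y l ^ 2 = S := by
      intro l hl
      rw [hT, Finset.mem_filter] at hl
      rcases mul_eq_zero.mp (key l) with h | h
      · exact absurd h hl.2
      · linear_combination -h
    have hsum : S = (T.card : ℂ) * S := by
      calc S = ∑ l ∈ T, y l ^ 2 := by
              rw [hS]
              symm
              apply Finset.sum_subset (Finset.subset_univ T)
              intro l _ hl
              rw [hT, Finset.mem_filter] at hl
              push_neg at hl
              have := hl (Finset.mem_univ l)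
              simp [this]
        _ = ∑ l ∈ T, S := Finset.sum_congr rfl hST
        _ = (T.card : ℂ) * S := by rw [Finset.sum_const, nsmul_eq_mul]
    have hcard : 2 ≤ T.card := by
      have hiT : i ∈ T := by simp [hT, hi]
      have hjT : j ∈ T := by simp [hT, hyj]
      have : ({j, i} : Finset (Fin n)) ⊆ T := by
        intro l hl
        simp only [Finset.mem_insert, Finset.mem_singleton] at hl
        rcases hl with rfl | rfl <;> assumption
      calc 2 = ({j, i} : Finset (Fin n)).card := by rw [Finset.card_insert_of_notMem (by simp [hj]), Finset.card_singleton]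
        _ ≤ T.card := Finset.card_le_card this
    have hS0 : S = 0 := by
      by_contra hS0
      have hfac : ((T.card : ℂ) - 1) * S = 0 := by linear_combination -hsum
      have : (T.card : ℂ) = 1 := by
        rcases mul_eq_zero.mp hfac with h | h
        · linear_combination h
        · exact absurd h hS0
      have h1 : (T.card : ℕ) = 1 := by exact_mod_cast this
      omega
    rw [hSi] at hS0
    exact hi (pow_eq_zero_iff (by norm_num) |>.mp hS0)
  refine ⟨i, y i, ?_⟩
  funext l
  by_cases h : l = i
  · subst h; simp
  · simp [Pi.single_apply, h, hzero l h]
end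

section
/- Let n ≥ 3, d ≥ 3, and h_i(y) = y_i^{d-2} · Σ_{j≠i} y_j^2 in ℂ[y_1,…,y_n] for i = 1,…,n. Then the common zero set h_1 = ⋯ = h_n = 0 in ℂ^n \ {0}, considered up to scalar, consists exactly of the n coordinate points (i.e., every common nonzero zero is a scalar multiple of some standard basis vector, and conversely each basis vector is a common zero). -/
open MvPolynomial

/-- The base locus of the linear system spanned by `h_i = y_i^{d-2} ∑_{j≠i} y_j²`
consists exactly of the `n` coordinate points of `ℙ^{n-1}`. -/
theorem stmt6 (n d : ℕ) (hn : 3 ≤ n) (hd : 3 ≤ d)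
    (h : Fin n → MvPolynomial (Fin n) ℂ)
    (hh : ∀ i : Fin n, h i
      = X i ^ (d - 2) * ∑ j ∈ Finset.univ.filter (fun j => j ≠ i), X j ^ 2) :
    (∀ y : Fin n → ℂ, y ≠ 0 → (∀ i : Fin n, eval y (h i) = 0) →
        ∃ (i : Fin n) (c : ℂ), c ≠ 0 ∧ y = c • (Pi.single i 1 : Fin n → ℂ)) ∧
    (∀ j i : Fin n, eval (Pi.single j 1 : Fin n → ℂ) (h i) = 0) := by
  have hd2 : d - 2 ≠ 0 := by omega
  constructor
  · intro y hy hz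
    set S := ∑ j, y j ^ 2 with hS
    have key : ∀ i, y i = 0 ∨ y i ^ 2 = S := by
      intro i
      have h1 := hz i
      rw [hh i] at h1
      simp only [eval_mul, eval_pow, eval_X, map_sum] at h1
      have hfil : Finset.univ.filter (fun j => j ≠ i) = Finset.univ.erase i := by
        ext j; simp [Finset.mem_erase, and_comm]
      rw [hfil, Finset.sum_erase_eq_sub (Finset.mem_univ i)] at h1
      rcases mul_eq_zero.mp h1 with h2 | h2
      · exact Or.inl (pow_eq_zero_iff hd2 |>.mp h2)
      · right; linear_combination -h2
    set T := Finset.univ.filter (fun j => y j ≠ 0) with hT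
    have hST : S = T.card * S := by
      have e1 : S = ∑ j ∈ T, y j ^ 2 := by
        rw [hS]; symm
        apply Finset.sum_subset (Finset.subset_univ _)
        intro j _ hj
        have : y j = 0 := by simpa [hT] using hj
        simp [this]
      have e2 : ∀ j ∈ T, y j ^ 2 = S := by
        intro j hj
        rcases key j with h0 | h0
        · exact absurd h0 (by simpa [hT] using hj)
        · exact h0
      conv_lhs => rw [e1, Finset.sum_congr rfl e2, Finset.sum_const, nsmul_eq_mul]
    have hcard1 : T.card ≤ 1 := by
      by_contra hc
      push_neg at hc
      have hS0 : S = 0 := by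
        have h3 : ((T.card : ℂ) - 1) * S = 0 := by linear_combination -hST
        rcases mul_eq_zero.mp h3 with h4 | h4
        · exfalso
          have h5 : (T.card : ℂ) = 1 := by linear_combination h4
          have h6 : T.card = 1 := by exact_mod_cast h5
          omega
        · exact h4
      obtain ⟨i, hi⟩ := Finset.card_pos.mp (by omega : 0 < T.card)
      have hyi : y i ≠ 0 := by simpa [hT] using hi
      rcases key i with h0 | h0
      · exact hyi h0
      · exact hyi (pow_eq_zero_iff two_ne_zero |>.mp (h0.trans hS0))
    have hTne : T.Nonempty := by
      obtain ⟨i, hi⟩ := Function.ne_iff.mp hy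
      have hi' : y i ≠ 0 := by simpa using hi
      exact ⟨i, by simp [hT, hi']⟩
    obtain ⟨i, hTi⟩ := Finset.card_eq_one.mp
      (le_antisymm hcard1 (Finset.card_pos.mpr hTne))
    refine ⟨i, y i, ?_, ?_⟩
    · have : i ∈ T := hTi ▸ Finset.mem_singleton_self i
      simpa [hT] using this
    · funext j
      by_cases hji : j = i
      · subst hji; simp
      · have hjT : j ∉ T := by rw [hTi]; simp [hji]
        have hyj : y j = 0 := by simpa [hT] using hjT
        simp [hyj, Pi.single_eq_of_ne hji]
  · intro j i
    rw [hh i]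
    simp only [eval_mul, eval_pow, eval_X, map_sum]
    by_cases hji : j = i
    · subst hji
      have hz : ∑ k ∈ Finset.univ.filter (fun k => k ≠ j),
          (Pi.single j 1 : Fin n → ℂ) k ^ 2 = 0 := by
        apply Finset.sum_eq_zero
        intro k hk
        have : k ≠ j := (Finset.mem_filter.mp hk).2
        simp [Pi.single_eq_of_ne this]
      rw [hz, mul_zero]
    · have hzero : (Pi.single j 1 : Fin n → ℂ) i = 0 :=
        Pi.single_eq_of_ne (Ne.symm hji) 1
      rw [hzero, zero_pow hd2, zero_mul]
end

section
/- For every n ≥ 3 and d ≥ 3 there exists a homogeneous polynomial g ∈ ℂ[y_1,…,y_n] of degree d such that the projective hypersurface g = 0 in P^{n-1} has a singular point at each of the n coordinate points p_1,…,p_n, and each of these is a node (nondegenerate quadratic singularity). -/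
open MvPolynomial

noncomputable def Sexp (n d : ℕ) (m a b : Fin n) : Fin n →₀ ℕ :=
  Finsupp.single m (d-2) + Finsupp.single a 1 + Finsupp.single b 1

noncomputable def gpoly (n d : ℕ) : MvPolynomial (Fin n) ℂ :=
  ∑ m, ∑ a, ∑ b, if m ≠ a ∧ m ≠ b ∧ a ≠ b then monomial (Sexp n d m a b) 1 else 0

lemma Sexp_apply (n d : ℕ) (m a b x : Fin n) :
    Sexp n d m a b x = (if m = x then d-2 else 0) + (if a = x then 1 else 0)
      + (if b = x then 1 else 0) := by
  simp only [Sexp, Finsupp.add_apply, Finsupp.single_apply]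

lemma degree_single' {n : ℕ} (x : Fin n) (k : ℕ) : (Finsupp.single x k).degree = k := by
  classical
  rcases eq_or_ne k 0 with rfl | h
  · simp [Finsupp.degree]
  · rw [Finsupp.degree_apply, Finsupp.support_single_ne_zero _ h]; simp

lemma Sexp_degree (n d : ℕ) (hd : 3 ≤ d) (m a b : Fin n) :
    (Sexp n d m a b).degree = d := by
  have h : ∀ f g : Fin n →₀ ℕ, (f + g).degree = f.degree + g.degree := by
    intro f g; simp [Finsupp.degree_eq_weight_one, map_add]
  rw [Sexp, h, h, degree_single', degree_single', degree_single']
  omega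

lemma gpoly_hom (n d : ℕ) (hd : 3 ≤ d) : (gpoly n d).IsHomogeneous d := by
  apply IsHomogeneous.sum; intro m _
  apply IsHomogeneous.sum; intro a _
  apply IsHomogeneous.sum; intro b _
  split_ifs
  · exact isHomogeneous_monomial _ (Sexp_degree n d hd m a b)
  · exact isHomogeneous_zero _ _ _

lemma eval_monomial_coord {n : ℕ} (i : Fin n) (t : Fin n →₀ ℕ) (c : ℂ) :
    eval (Pi.single i 1 : Fin n → ℂ) (monomial t c)
      = if ∀ x, x ≠ i → t x = 0 then c else 0 := by
  rw [eval_monomial]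
  split_ifs with h
  · rw [Finsupp.prod, Finset.prod_eq_one, mul_one]
    intro x hx
    have : x = i := by
      by_contra hxi
      exact (Finsupp.mem_support_iff.mp hx) (h x hxi)
    subst this; simp
  · push_neg at h
    obtain ⟨x, hxi, hx⟩ := h
    rw [Finsupp.prod, Finset.prod_eq_zero (Finsupp.mem_support_iff.mpr hx), mul_zero]
    simp [Pi.single_apply, hxi, zero_pow hx]

lemma eval_coord_zero {n : ℕ} (i : Fin n) (t : Fin n →₀ ℕ) (c : ℂ) (x y : Fin n)
    (hxy : x ≠ y) (hx : t x ≠ 0) (hy : t y ≠ 0) :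
    eval (Pi.single i 1 : Fin n → ℂ) (monomial t c) = 0 := by
  rw [eval_monomial_coord, if_neg]
  push_neg
  rcases eq_or_ne x i with rfl | h
  · exact ⟨y, fun hyx => hxy hyx.symm, hy⟩
  · exact ⟨x, h, hx⟩

lemma pderiv_pderiv_monomial {n : ℕ} (j k : Fin n) (s : Fin n →₀ ℕ) :
    pderiv j (pderiv k (monomial s (1:ℂ)))
      = monomial (s - Finsupp.single k 1 - Finsupp.single j 1)
          ((s k : ℂ) * (((s - Finsupp.single k 1 : Fin n →₀ ℕ)) j : ℂ)) := by
  rw [pderiv_monomial, pderiv_monomial, one_mul]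

lemma sub_single_apply {n : ℕ} (s : Fin n →₀ ℕ) (k x : Fin n) :
    ((s - Finsupp.single k 1 : Fin n →₀ ℕ)) x = s x - (if k = x then 1 else 0) := by
  rw [Finsupp.tsub_apply, Finsupp.single_apply]

lemma gpoly_eval (n d : ℕ) (hd : 3 ≤ d) (i : Fin n) :
    eval (Pi.single i 1 : Fin n → ℂ) (gpoly n d) = 0 := by
  rw [gpoly, map_sum]
  apply Finset.sum_eq_zero; intro m _
  rw [map_sum]
  apply Finset.sum_eq_zero; intro a _
  rw [map_sum]
  apply Finset.sum_eq_zero; intro b _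
  split_ifs with h
  · refine eval_coord_zero i _ _ a b h.2.2 ?_ ?_ <;>
      simp [Sexp_apply, h.1, h.2.1, h.2.2, (h.2.2 : a ≠ b).symm, Ne.symm h.1, Ne.symm h.2.1]
  · simp

lemma gpoly_grad (n d : ℕ) (hd : 3 ≤ d) (i j : Fin n) :
    eval (Pi.single i 1 : Fin n → ℂ) (pderiv j (gpoly n d)) = 0 := by
  rw [gpoly, map_sum, map_sum]
  apply Finset.sum_eq_zero; intro m _
  rw [map_sum, map_sum]
  apply Finset.sum_eq_zero; intro a _
  rw [map_sum, map_sum]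
  apply Finset.sum_eq_zero; intro b _
  split_ifs with h
  · obtain ⟨hma, hmb, hab⟩ := h
    rw [pderiv_monomial]
    have hsub : ∀ x : Fin n, ((Sexp n d m a b - Finsupp.single j 1 : Fin n →₀ ℕ)) x
        = Sexp n d m a b x - (if j = x then 1 else 0) := by
      intro x; rw [Finsupp.tsub_apply, Finsupp.single_apply]
    by_cases hjm : j = m
    · subst hjm
      refine eval_coord_zero i _ _ a b hab ?_ ?_ <;>
        simp [hsub, Sexp_apply, hma, hmb, hab, Ne.symm hma, Ne.symm hmb, hab.symm]
    · by_cases hja : j = a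
      · subst hja
        refine eval_coord_zero i _ _ m b hmb ?_ ?_ <;>
          simp [hsub, Sexp_apply, hma, hmb, hab, Ne.symm hma, Ne.symm hmb, hab.symm, hjm] <;> omega
      · by_cases hjb : j = b
        · subst hjb
          refine eval_coord_zero i _ _ m a hma ?_ ?_ <;>
            simp [hsub, Sexp_apply, hma, hmb, hab, Ne.symm hma, Ne.symm hmb, hab.symm, hjm, hja] <;> omega
        · have : Sexp n d m a b j = 0 := by
            simp [Sexp_apply, Ne.symm hjm, Ne.symm hja, Ne.symm hjb]
          simp [this]
  · simp

lemma hess_pos {n d : ℕ} (m a b : Fin n) (hma : m ≠ a) (hmb : m ≠ b) (hab : a ≠ b) :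
    eval (Pi.single m 1 : Fin n → ℂ)
      (pderiv a (pderiv b (monomial (Sexp n d m a b) (1:ℂ)))) = 1 := by
  have hcond : ∀ x, x ≠ m →
      ((Sexp n d m a b - Finsupp.single b 1 - Finsupp.single a 1 : Fin n →₀ ℕ)) x = 0 := by
    intro x hx
    rw [sub_single_apply, sub_single_apply, Sexp_apply]
    rw [if_neg (fun h => hx h.symm)]
    split_ifs <;> omega
  rw [pderiv_pderiv_monomial, eval_monomial_coord, if_pos hcond]
  have h1 : Sexp n d m a b b = 1 := by simp [Sexp_apply, hmb, hab]
  have h2 : ((Sexp n d m a b - Finsupp.single b 1 : Fin n →₀ ℕ)) a = 1 := by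
    rw [sub_single_apply]
    simp [Sexp_apply, hma, hab]
  rw [h1, h2]; norm_num

lemma Sexp_swap (n d : ℕ) (m a b : Fin n) : Sexp n d m a b = Sexp n d m b a := by
  ext t; rw [Sexp_apply, Sexp_apply]; ring

lemma hess_term_big {n d : ℕ} (hd4 : 4 ≤ d) (i j k m a b : Fin n)
    (hji : j ≠ i) (hki : k ≠ i) (hjk : j ≠ k) :
    eval (Pi.single i 1 : Fin n → ℂ)
      (pderiv j (pderiv k (if m ≠ a ∧ m ≠ b ∧ a ≠ b then monomial (Sexp n d m a b) 1 else 0)))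
      = (if m = i ∧ a = j ∧ b = k then (1:ℂ) else 0)
        + (if m = i ∧ a = k ∧ b = j then (1:ℂ) else 0) := by
  by_cases hP : m ≠ a ∧ m ≠ b ∧ a ≠ b
  · obtain ⟨hma, hmb, hab⟩ := hP
    rw [if_pos ⟨hma, hmb, hab⟩]
    by_cases h1 : m = i ∧ a = j ∧ b = k
    · obtain ⟨hm, ha, hb⟩ := h1
      rw [hm, ha, hb, hess_pos i j k (Ne.symm hji) (Ne.symm hki) hjk]
      simp [hjk, Ne.symm hjk]
    · by_cases h2 : m = i ∧ a = k ∧ b = j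
      · obtain ⟨hm, ha, hb⟩ := h2
        rw [hm, ha, hb, Sexp_swap, hess_pos i j k (Ne.symm hji) (Ne.symm hki) hjk]
        simp [hjk, Ne.symm hjk]
      · rw [pderiv_pderiv_monomial, eval_monomial_coord, if_neg, if_neg h1, if_neg h2, add_zero]
        intro hcond
        have hmi : m = i := by
          by_contra hmi
          have hc := hcond m hmi
          rw [sub_single_apply, sub_single_apply, Sexp_apply] at hc
          rw [if_pos rfl, if_neg (Ne.symm hma), if_neg (Ne.symm hmb)] at hc
          rcases eq_or_ne k m with hk | hk <;> rcases eq_or_ne j m with hj | hj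
          · exact hjk (hj.trans hk.symm)
          all_goals simp [hk, hj] at hc; omega
        have hai : a ≠ i := fun h => hma (hmi.trans h.symm)
        have hbi : b ≠ i := fun h => hmb (hmi.trans h.symm)
        have ha' : a = j ∨ a = k := by
          by_contra hno; push_neg at hno
          have hc := hcond a hai
          rw [sub_single_apply, sub_single_apply, Sexp_apply] at hc
          rw [if_neg hma, if_pos rfl, if_neg (fun h => hab h.symm),
            if_neg (fun h => hno.2 h.symm), if_neg (fun h => hno.1 h.symm)] at hc
          omega
        have hb' : b = j ∨ b = k := by
          by_contra hno; push_neg at hno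
          have hc := hcond b hbi
          rw [sub_single_apply, sub_single_apply, Sexp_apply] at hc
          rw [if_neg hmb, if_neg hab, if_pos rfl,
            if_neg (fun h => hno.2 h.symm), if_neg (fun h => hno.1 h.symm)] at hc
          omega
        rcases ha' with h | h <;> rcases hb' with h' | h'
        · exact hab (h.trans h'.symm)
        · exact h1 ⟨hmi, h, h'⟩
        · exact h2 ⟨hmi, h, h'⟩
        · exact hab (h.trans h'.symm)
  · rw [if_neg hP]
    have e1 : ¬(m = i ∧ a = j ∧ b = k) := by
      rintro ⟨rfl, rfl, rfl⟩; exact hP ⟨Ne.symm hji, Ne.symm hki, hjk⟩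
    have e2 : ¬(m = i ∧ a = k ∧ b = j) := by
      rintro ⟨rfl, rfl, rfl⟩; exact hP ⟨Ne.symm hki, Ne.symm hji, Ne.symm hjk⟩
    simp [e1, e2]

lemma Sexp3_perm {n : ℕ} (m a b : Fin n) (m' a' b' : Fin n)
    (h : ∀ x : Fin n, ((if m = x then 1 else 0) + (if a = x then 1 else 0)
        + (if b = x then 1 else 0) : ℕ)
      = (if m' = x then 1 else 0) + (if a' = x then 1 else 0) + (if b' = x then 1 else 0)) :
    Sexp n 3 m a b = Sexp n 3 m' a' b' := by
  ext t; rw [Sexp_apply, Sexp_apply]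
  have := h t
  norm_num at this ⊢
  omega

lemma hess_term_three {n : ℕ} (i j k m a b : Fin n)
    (hji : j ≠ i) (hki : k ≠ i) (hjk : j ≠ k) :
    eval (Pi.single i 1 : Fin n → ℂ)
      (pderiv j (pderiv k (if m ≠ a ∧ m ≠ b ∧ a ≠ b then monomial (Sexp n 3 m a b) 1 else 0)))
      = (if m = i ∧ a = j ∧ b = k then (1:ℂ) else 0)
        + (if m = i ∧ a = k ∧ b = j then (1:ℂ) else 0)
        + (if m = j ∧ a = i ∧ b = k then (1:ℂ) else 0)
        + (if m = j ∧ a = k ∧ b = i then (1:ℂ) else 0)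
        + (if m = k ∧ a = i ∧ b = j then (1:ℂ) else 0)
        + (if m = k ∧ a = j ∧ b = i then (1:ℂ) else 0) := by
  have hij : i ≠ j := Ne.symm hji
  have hik : i ≠ k := Ne.symm hki
  have hkj : k ≠ j := Ne.symm hjk
  by_cases hP : m ≠ a ∧ m ≠ b ∧ a ≠ b
  · obtain ⟨hma, hmb, hab⟩ := hP
    rw [if_pos ⟨hma, hmb, hab⟩]
    have hperm : ∀ m' a' b' : Fin n,
        (∀ x : Fin n, ((if m' = x then 1 else 0) + (if a' = x then 1 else 0)
            + (if b' = x then 1 else 0) : ℕ)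
          = (if i = x then 1 else 0) + (if j = x then 1 else 0) + (if k = x then 1 else 0)) →
        eval (Pi.single i 1 : Fin n → ℂ)
          (pderiv j (pderiv k (monomial (Sexp n 3 m' a' b') 1))) = 1 := by
      intro m' a' b' h
      rw [Sexp3_perm m' a' b' i j k h, hess_pos i j k hij hik hjk]
    by_cases h1 : m = i ∧ a = j ∧ b = k
    · obtain ⟨hm, ha, hb⟩ := h1
      rw [hm, ha, hb, hperm i j k (fun x => rfl)]
      simp [hij, hik, hkj, hji, hki, hjk]
    · by_cases h2 : m = i ∧ a = k ∧ b = j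
      · obtain ⟨hm, ha, hb⟩ := h2
        rw [hm, ha, hb, hperm i k j (fun x => by ring)]
        simp [hij, hik, hkj, hji, hki, hjk]
      · by_cases h3 : m = j ∧ a = i ∧ b = k
        · obtain ⟨hm, ha, hb⟩ := h3
          rw [hm, ha, hb, hperm j i k (fun x => by ring)]
          simp [hij, hik, hkj, hji, hki, hjk]
        · by_cases h4 : m = j ∧ a = k ∧ b = i
          · obtain ⟨hm, ha, hb⟩ := h4
            rw [hm, ha, hb, hperm j k i (fun x => by ring)]
            simp [hij, hik, hkj, hji, hki, hjk]
          · by_cases h5 : m = k ∧ a = i ∧ b = j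
            · obtain ⟨hm, ha, hb⟩ := h5
              rw [hm, ha, hb, hperm k i j (fun x => by ring)]
              simp [hij, hik, hkj, hji, hki, hjk]
            · by_cases h6 : m = k ∧ a = j ∧ b = i
              · obtain ⟨hm, ha, hb⟩ := h6
                rw [hm, ha, hb, hperm k j i (fun x => by ring)]
                simp [hij, hik, hkj, hji, hki, hjk]
              · rw [pderiv_pderiv_monomial, eval_monomial_coord, if_neg,
                  if_neg h1, if_neg h2, if_neg h3, if_neg h4, if_neg h5, if_neg h6]
                · norm_num
                intro hcond
                have hm3 : m = i ∨ m = j ∨ m = k := by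
                  by_contra hno; push_neg at hno
                  have hc := hcond m hno.1
                  rw [sub_single_apply, sub_single_apply, Sexp_apply] at hc
                  rw [if_pos rfl, if_neg (Ne.symm hma), if_neg (Ne.symm hmb),
                    if_neg (fun h => hno.2.2 h.symm), if_neg (fun h => hno.2.1 h.symm)] at hc
                  omega
                have ha3 : a = i ∨ a = j ∨ a = k := by
                  by_contra hno; push_neg at hno
                  have hc := hcond a hno.1
                  rw [sub_single_apply, sub_single_apply, Sexp_apply] at hc
                  rw [if_neg hma, if_pos rfl, if_neg (fun h => hab h.symm),
                    if_neg (fun h => hno.2.2 h.symm), if_neg (fun h => hno.2.1 h.symm)] at hc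
                  omega
                have hb3 : b = i ∨ b = j ∨ b = k := by
                  by_contra hno; push_neg at hno
                  have hc := hcond b hno.1
                  rw [sub_single_apply, sub_single_apply, Sexp_apply] at hc
                  rw [if_neg hmb, if_neg hab, if_pos rfl,
                    if_neg (fun h => hno.2.2 h.symm), if_neg (fun h => hno.2.1 h.symm)] at hc
                  omega
                rcases hm3 with h | h | h <;> rcases ha3 with h' | h' | h' <;>
                  rcases hb3 with h'' | h'' | h'' <;> simp_all
  · rw [if_neg hP]
    have e1 : ¬(m = i ∧ a = j ∧ b = k) := by
      rintro ⟨rfl, rfl, rfl⟩; exact hP ⟨hij, hik, hjk⟩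
    have e2 : ¬(m = i ∧ a = k ∧ b = j) := by
      rintro ⟨rfl, rfl, rfl⟩; exact hP ⟨hik, hij, hkj⟩
    have e3 : ¬(m = j ∧ a = i ∧ b = k) := by
      rintro ⟨rfl, rfl, rfl⟩; exact hP ⟨hji, hjk, hik⟩
    have e4 : ¬(m = j ∧ a = k ∧ b = i) := by
      rintro ⟨rfl, rfl, rfl⟩; exact hP ⟨hjk, hji, hki⟩
    have e5 : ¬(m = k ∧ a = i ∧ b = j) := by
      rintro ⟨rfl, rfl, rfl⟩; exact hP ⟨hki, hkj, hij⟩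
    have e6 : ¬(m = k ∧ a = j ∧ b = i) := by
      rintro ⟨rfl, rfl, rfl⟩; exact hP ⟨hkj, hki, hji⟩
    simp [e1, e2, e3, e4, e5, e6]

lemma hess_diag_term {n d : ℕ} (hd : 3 ≤ d) (i j m a b : Fin n) :
    eval (Pi.single i 1 : Fin n → ℂ)
      (pderiv j (pderiv j (if m ≠ a ∧ m ≠ b ∧ a ≠ b then monomial (Sexp n d m a b) 1 else 0)))
      = 0 := by
  by_cases hP : m ≠ a ∧ m ≠ b ∧ a ≠ b
  · obtain ⟨hma, hmb, hab⟩ := hP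
    rw [if_pos ⟨hma, hmb, hab⟩, pderiv_pderiv_monomial]
    by_cases hjm : j = m
    · subst hjm
      by_cases hd4 : 4 ≤ d
      · apply eval_coord_zero i _ _ a b hab <;>
        · rw [sub_single_apply, sub_single_apply, Sexp_apply]
          simp [hma, hmb, hab, Ne.symm hma, Ne.symm hmb, Ne.symm hab]
      · have hd3 : d = 3 := by omega
        have h2 : ((Sexp n d j a b - Finsupp.single j 1 : Fin n →₀ ℕ)) j = 0 := by
          rw [sub_single_apply, Sexp_apply]
          simp [Ne.symm hma, Ne.symm hmb]
          omega
        rw [h2]; simp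
    · have h2 : ((Sexp n d m a b - Finsupp.single j 1 : Fin n →₀ ℕ)) j = 0 := by
        rw [sub_single_apply, Sexp_apply]
        rw [if_neg (fun h => hjm h.symm)]
        split_ifs <;> omega
      rw [h2]; simp
  · rw [if_neg hP]; simp

lemma sum_ind {n : ℕ} (x y z : Fin n) :
    ∑ m : Fin n, ∑ a : Fin n, ∑ b : Fin n,
      (if m = x ∧ a = y ∧ b = z then (1:ℂ) else 0) = 1 := by
  simp [ite_and, Finset.sum_ite_eq', Finset.sum_ite_eq]

lemma gpoly_hess_offdiag {n d : ℕ} (hd : 3 ≤ d) (i j k : Fin n)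
    (hji : j ≠ i) (hki : k ≠ i) (hjk : j ≠ k) :
    eval (Pi.single i 1 : Fin n → ℂ) (pderiv j (pderiv k (gpoly n d)))
      = if d = 3 then 6 else 2 := by
  rw [gpoly]
  simp only [map_sum]
  by_cases hd3 : d = 3
  · subst hd3
    rw [if_pos rfl]
    calc ∑ m : Fin n, ∑ a : Fin n, ∑ b : Fin n, eval (Pi.single i 1 : Fin n → ℂ)
          (pderiv j (pderiv k (if m ≠ a ∧ m ≠ b ∧ a ≠ b then monomial (Sexp n 3 m a b) 1 else 0)))
        = ∑ m : Fin n, ∑ a : Fin n, ∑ b : Fin n,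
            ((if m = i ∧ a = j ∧ b = k then (1:ℂ) else 0)
            + (if m = i ∧ a = k ∧ b = j then (1:ℂ) else 0)
            + (if m = j ∧ a = i ∧ b = k then (1:ℂ) else 0)
            + (if m = j ∧ a = k ∧ b = i then (1:ℂ) else 0)
            + (if m = k ∧ a = i ∧ b = j then (1:ℂ) else 0)
            + (if m = k ∧ a = j ∧ b = i then (1:ℂ) else 0)) := by
          refine Finset.sum_congr rfl fun m _ => Finset.sum_congr rfl fun a _ =>
            Finset.sum_congr rfl fun b _ => ?_
          exact hess_term_three i j k m a b hji hki hjk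
      _ = 6 := by
          simp only [Finset.sum_add_distrib]
          rw [sum_ind, sum_ind, sum_ind, sum_ind, sum_ind, sum_ind]
          norm_num
  · have hd4 : 4 ≤ d := by omega
    rw [if_neg hd3]
    calc ∑ m : Fin n, ∑ a : Fin n, ∑ b : Fin n, eval (Pi.single i 1 : Fin n → ℂ)
          (pderiv j (pderiv k (if m ≠ a ∧ m ≠ b ∧ a ≠ b then monomial (Sexp n d m a b) 1 else 0)))
        = ∑ m : Fin n, ∑ a : Fin n, ∑ b : Fin n,
            ((if m = i ∧ a = j ∧ b = k then (1:ℂ) else 0)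
            + (if m = i ∧ a = k ∧ b = j then (1:ℂ) else 0)) := by
          refine Finset.sum_congr rfl fun m _ => Finset.sum_congr rfl fun a _ =>
            Finset.sum_congr rfl fun b _ => ?_
          exact hess_term_big hd4 i j k m a b hji hki hjk
      _ = 2 := by
          simp only [Finset.sum_add_distrib]
          rw [sum_ind, sum_ind]
          norm_num

lemma gpoly_hess_diag {n d : ℕ} (hd : 3 ≤ d) (i j : Fin n) :
    eval (Pi.single i 1 : Fin n → ℂ) (pderiv j (pderiv j (gpoly n d))) = 0 := by
  rw [gpoly]
  simp only [map_sum]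
  apply Finset.sum_eq_zero; intro m _
  apply Finset.sum_eq_zero; intro a _
  apply Finset.sum_eq_zero; intro b _
  exact hess_diag_term hd i j m a b

/-- For every `n ≥ 3` and `d ≥ 3` there is a homogeneous polynomial `g` of degree `d`
in `n` variables whose projective hypersurface `g = 0` in `ℙ^{n-1}` is singular at each
coordinate point `p_i`, each singularity being a node: `g` and its gradient vanish at
`p_i`, and the Hessian quadratic form of `g` at `p_i` is nondegenerate on the chart
hyperplane `{v : v i = 0}`. -/
theorem stmt9 (n d : ℕ) (hn : 3 ≤ n) (hd : 3 ≤ d) :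
    ∃ g : MvPolynomial (Fin n) ℂ, g.IsHomogeneous d ∧
      ∀ i : Fin n,
        eval (Pi.single i 1 : Fin n → ℂ) g = 0 ∧
        (∀ j : Fin n, eval (Pi.single i 1 : Fin n → ℂ) (pderiv j g) = 0) ∧
        (∀ v : Fin n → ℂ, v i = 0 →
          (∀ w : Fin n → ℂ, w i = 0 →
            ∑ j : Fin n, ∑ k : Fin n,
              eval (Pi.single i 1 : Fin n → ℂ) (pderiv j (pderiv k g)) * v j * w k = 0) →
          v = 0) := by
  refine ⟨gpoly n d, gpoly_hom n d hd, fun i =>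
    ⟨gpoly_eval n d hd i, fun j => gpoly_grad n d hd i j, ?_⟩⟩
  intro v hvi hv
  have hc0 : (if d = 3 then (6:ℂ) else 2) ≠ 0 := by split_ifs <;> norm_num
  have key : ∀ j' : Fin n, j' ≠ i → ∑ j ∈ (Finset.univ \ {i, j'}), v j = 0 := by
    intro j' hj'
    have hw := hv (Pi.single j' 1) (Pi.single_eq_of_ne (Ne.symm hj') 1)
    have hw2 : ∑ j : Fin n,
        eval (Pi.single i 1 : Fin n → ℂ) (pderiv j (pderiv j' (gpoly n d))) * v j = 0 := by
      rw [← hw]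
      apply Finset.sum_congr rfl; intro j _
      rw [Finset.sum_eq_single j' (fun k _ hk => by
        rw [Pi.single_eq_of_ne hk, mul_zero]) (fun h => absurd (Finset.mem_univ j') h)]
      rw [Pi.single_eq_same, mul_one]
    have hsum : ∑ j : Fin n,
        eval (Pi.single i 1 : Fin n → ℂ) (pderiv j (pderiv j' (gpoly n d))) * v j
        = (if d = 3 then (6:ℂ) else 2) * ∑ j ∈ (Finset.univ \ {i, j'}), v j := by
      rw [Finset.mul_sum,
        ← Finset.sum_subset (Finset.subset_univ (Finset.univ \ {i, j'}))]
      · apply Finset.sum_congr rfl; intro j hj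
        rw [Finset.mem_sdiff, Finset.mem_insert, Finset.mem_singleton] at hj
        push_neg at hj
        obtain ⟨-, hji, hjj'⟩ := hj
        rw [gpoly_hess_offdiag hd i j j' hji hj' hjj']
      · intro j _ hj
        rw [Finset.mem_sdiff] at hj
        push_neg at hj
        have := hj (Finset.mem_univ j)
        rw [Finset.mem_insert, Finset.mem_singleton] at this
        rcases this with rfl | rfl
        · rw [hvi, mul_zero]
        · rw [gpoly_hess_diag hd i j, zero_mul]
    rw [hsum] at hw2
    exact (mul_eq_zero.mp hw2).resolve_left hc0
  have heq : ∀ j1 j2 : Fin n, j1 ≠ i → j2 ≠ i → v j1 = v j2 := by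
    intro j1 j2 h1 h2
    rcases eq_or_ne j1 j2 with rfl | h12
    · rfl
    have k1 := key j1 h1
    have k2 := key j2 h2
    have e1 : (Finset.univ \ {i, j1} : Finset (Fin n))
        = insert j2 (Finset.univ \ {i, j1, j2}) := by
      ext x
      by_cases hx : x = j2 <;>
        simp [hx, h2, Ne.symm h12]
    have e2 : (Finset.univ \ {i, j2} : Finset (Fin n))
        = insert j1 (Finset.univ \ {i, j1, j2}) := by
      ext x
      by_cases hx : x = j1 <;>
        simp [hx, h1, h12]
    rw [e1, Finset.sum_insert (by simp)] at k1
    rw [e2, Finset.sum_insert (by simp)] at k2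
    linear_combination k2 - k1
  obtain ⟨j0, hj0⟩ : ∃ j0 : Fin n, j0 ≠ i := by
    have hcard : 0 < (Finset.univ \ {i} : Finset (Fin n)).card := by
      rw [Finset.card_sdiff_of_subset (Finset.subset_univ _), Finset.card_univ, Fintype.card_fin]
      simp; omega
    obtain ⟨j0, hj0⟩ := Finset.card_pos.mp hcard
    exact ⟨j0, by simpa using hj0⟩
  have hv0 : v j0 = 0 := by
    have k0 := key j0 hj0
    have hconst : ∑ j ∈ (Finset.univ \ {i, j0}), v j
        = ((Finset.univ \ {i, j0} : Finset (Fin n)).card : ℂ) * v j0 := by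
      rw [Finset.sum_congr rfl (fun j hj => ?_), Finset.sum_const, nsmul_eq_mul]
      rw [Finset.mem_sdiff, Finset.mem_insert, Finset.mem_singleton] at hj
      push_neg at hj
      exact heq j j0 hj.2.1 hj0
    have hcard2 : (Finset.univ \ {i, j0} : Finset (Fin n)).card = n - 2 := by
      rw [Finset.card_sdiff_of_subset (Finset.subset_univ _), Finset.card_univ, Fintype.card_fin,
        Finset.card_insert_of_notMem (by simp [Ne.symm hj0]), Finset.card_singleton]
    rw [hconst, hcard2] at k0
    have hne : ((n - 2 : ℕ) : ℂ) ≠ 0 := Nat.cast_ne_zero.mpr (by omega)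
    exact (mul_eq_zero.mp k0).resolve_left hne
  funext x
  rcases eq_or_ne x i with rfl | hx
  · simpa using hvi
  · simp only [Pi.zero_apply]
    rw [heq x j0 hx hj0, hv0]
end
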